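/- Assume ψ : Σ → ℝ is constant on one-cylinder sets and 0 ∈ (ψ̲, ψ̄). Then for every N > 0 and every ε > 0 there is a finite set Λ ⊂ I^* such that for every finite word ω with |S_ω ψ| ≤ N there exists ν ∈ Λ with |S_{ων} ψ| ≤ ε (i.e. the concatenation ων lies in C(ψ,ε)). -/

import Mathlib

open Filter MeasureTheory Set
open scoped BigOperators ENNReal Topology

namespace ThermoTransient

/-- The full shift space over the alphabet `I`. -/
abbrev Seq (I : Type*) : Type _ := ℕ → I

variable {I : Type*} [Fintype I]

/-- The left shift `σ`. -/
def shift (ω : Seq I) : Seq I := fun i => ω (i + 1)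

/-- Birkhoff sums `S_n f`. -/
noncomputable def birk (f : Seq I → ℝ) (n : ℕ) (ω : Seq I) : ℝ :=
  ∑ k ∈ Finset.range n, f (shift^[k] ω)

/-- The cylinder set of the finite word `w`. -/
def cyl (w : List I) : Set (Seq I) := {x | ∀ i : Fin w.length, x i.1 = w.get i}

/-- `S_ω f = sup_{x ∈ [ω]} S_{|ω|} f (x)`. -/
noncomputable def Sword (f : Seq I → ℝ) (w : List I) : ℝ :=
  sSup (birk f w.length '' cyl w)

/-- Hölder continuity with respect to the metric
`d(ω,τ) = exp(-max{k : ω and τ agree on the first k coordinates})`: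
there are `a > 0` and a constant `C` with `|f ω - f τ| ≤ C * exp (-a n)` whenever
`ω` and `τ` agree on the first `n` coordinates. -/
def Holder (f : Seq I → ℝ) : Prop :=
  ∃ a : ℝ, 0 < a ∧ ∃ C : ℝ, ∀ n : ℕ, ∀ ω τ : Seq I,
    (∀ j < n, ω j = τ j) → |f ω - f τ| ≤ C * Real.exp (-(a * n))

/-- The distortion constant `D_f`. -/
noncomputable def distortion (f : Seq I → ℝ) : ℝ :=
  sSup {r : ℝ | ∃ w : List I, w ≠ [] ∧ ∃ x ∈ cyl w, ∃ y ∈ cyl w,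
    r = |birk f w.length x - birk f w.length y|}

/-- The prefix word `ω|_n`. -/
def pre (ω : Seq I) (n : ℕ) : List I := List.ofFn fun k : Fin n => ω k.1

/-- The classical topological pressure `𝔓(f)`. -/
noncomputable def pressure (f : Seq I → ℝ) : ℝ :=
  limsup (fun n : ℕ => (n : ℝ)⁻¹ *
    Real.log (∑ u : Fin n → I, Real.exp (Sword f (List.ofFn u)))) atTop

/-- The classical topological pressure `𝔓(f, J)` restricted to the subshift over the
subalphabet `{i : I | p i}`. -/
noncomputable def pressureOn (p : I → Prop) (f : Seq I → ℝ) : ℝ :=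
  letI := Classical.decPred p
  limsup (fun n : ℕ => (n : ℝ)⁻¹ *
    Real.log (∑ u : Fin n → {i : I // p i},
      Real.exp (Sword f (List.ofFn fun k => (u k : I))))) atTop

/-- `ψ̲ = inf_ω liminf_n S_n ψ(ω)/n`. -/
noncomputable def psiLow (ψ : Seq I → ℝ) : ℝ :=
  ⨅ ω : Seq I, liminf (fun n : ℕ => birk ψ n ω / n) atTop

/-- `ψ̄ = sup_ω limsup_n S_n ψ(ω)/n`. -/
noncomputable def psiUpp (ψ : Seq I → ℝ) : ℝ :=
  ⨆ ω : Seq I, limsup (fun n : ℕ => birk ψ n ω / n) atTop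

/-- The partition sum `ζ_n(f,ψ,K) = Σ_{ω ∈ C_n(ψ,K)} exp (S_ω f)`, where
`C_n(ψ,K)` is the set of words of length `n` with `|S_ω ψ| ≤ K`. -/
noncomputable def Zn (f ψ : Seq I → ℝ) (K : ℝ) (n : ℕ) : ℝ :=
  ∑ u : Fin n → I,
    if |Sword ψ (List.ofFn u)| ≤ K then Real.exp (Sword f (List.ofFn u)) else 0

/-- `P(f,ψ,K) = limsup_n (1/n) log ζ_n(f,ψ,K)` (with value `⊥` contributed by empty
partition sums). -/
noncomputable def fibrePK (f ψ : Seq I → ℝ) (K : ℝ) : EReal :=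
  limsup (fun n : ℕ => if Zn f ψ K n = 0 then (⊥ : EReal)
    else (((n : ℝ)⁻¹ * Real.log (Zn f ψ K n) : ℝ) : EReal)) atTop

/-- The fibre-induced pressure `P(f,ψ) = lim_{K → ∞} P(f,ψ,K)`. -/
noncomputable def fibreP (f ψ : Seq I → ℝ) : EReal :=
  limsup (fun K : ℝ => fibrePK f ψ K) atTop

/-- The `α`-Poincaré exponent
`δ_α = inf {s ≥ 0 : Σ_{ω ∈ I^*, |S_ω (ψ - α)| ≤ K} exp (s S_ω φ) < ∞}`. -/
noncomputable def poincare (φ ψ : Seq I → ℝ) (α K : ℝ) : ℝ :=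
  sInf {s : ℝ | 0 ≤ s ∧
    Summable (fun w : {w : List I // |Sword (fun x => ψ x - α) w| ≤ K} =>
      Real.exp (s * Sword φ (w : List I)))}

/-- `μ` is the Gibbs measure of the potential `g`: a shift-invariant Borel probability
measure satisfying the Gibbs property. -/
def IsGibbs [MeasurableSpace I] (g : Seq I → ℝ) (μ : Measure (Seq I)) : Prop :=
  IsProbabilityMeasure μ ∧
  (∀ s : Set (Seq I), MeasurableSet s → μ (shift ⁻¹' s) = μ s) ∧
  ∃ c : ℝ, 1 ≤ c ∧ ∀ w : List I, w ≠ [] → ∀ x ∈ cyl w,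
    (μ (cyl w)).toReal ≤ c * Real.exp (birk g w.length x - w.length * pressure g) ∧
    c⁻¹ * Real.exp (birk g w.length x - w.length * pressure g) ≤ (μ (cyl w)).toReal

/-- Iterated composition `h_{ω₁} ∘ ⋯ ∘ h_{ωₙ}` of the inverse branches along a word. -/
def hcomp (h : I → ℝ → ℝ) : List I → ℝ → ℝ
  | [] => id
  | i :: w => h i ∘ hcomp h w

/-- An expanding interval map `F` with finitely many `C^{1+ε}` full branches on
pairwise disjoint subintervals of `[0,1]`, together with its inverse branches `h i`,
coding map `proj = π`, and an integer step length function `step = Ψ` constant on the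
branch intervals. -/
structure ExpandingSystem (I : Type*) [Fintype I] where
  F : ℝ → ℝ
  F' : ℝ → ℝ
  branch : I → Set ℝ
  step : ℝ → ℤ
  h : I → ℝ → ℝ
  proj : Seq I → ℝ
  two_le_card : 2 ≤ Fintype.card I
  branch_subset : ∀ i, branch i ⊆ Icc (0:ℝ) 1
  branch_ordConnected : ∀ i, (branch i).OrdConnected
  branch_interior : ∀ i, (interior (branch i)).Nonempty
  branch_disjoint : Pairwise fun i j => Disjoint (branch i) (branch j)
  branch_bij : ∀ i, BijOn F (branch i) (Icc (0:ℝ) 1)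
  branch_deriv : ∀ i, ∀ x ∈ branch i, HasDerivWithinAt F (F' x) (branch i) x
  expanding : ∀ i, ∀ x ∈ branch i, 1 < |F' x|
  deriv_holder : ∃ ε : ℝ, 0 < ε ∧ ∃ C : ℝ, ∀ i, ∀ x ∈ branch i, ∀ y ∈ branch i,
    |F' x - F' y| ≤ C * |x - y| ^ ε
  h_cont : ∀ i, ContinuousOn (h i) (Icc (0:ℝ) 1)
  h_maps : ∀ i, MapsTo (h i) (Icc (0:ℝ) 1) (closure (branch i))
  h_inv : ∀ i, ∀ x ∈ branch i, h i (F x) = x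
  step_const : ∀ i, ∀ x ∈ branch i, ∀ y ∈ branch i, step x = step y
  proj_spec : ∀ ω : Seq I, (⋂ n : ℕ, hcomp h (pre ω n) '' Icc (0:ℝ) 1) = {proj ω}

/-- The countable set `D = ⋃_{ω ∈ I^*} h_{ω₁} ∘ ⋯ ∘ h_{ωₙ}({0,1})`. -/
def ExpandingSystem.Dset (E : ExpandingSystem I) : Set ℝ :=
  ⋃ w : List I, hcomp E.h w '' ({0, 1} : Set ℝ)

/-- The set `R = (π(Σ) \ D) + ℤ`. -/
def ExpandingSystem.Rset (E : ExpandingSystem I) : Set ℝ :=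
  {x : ℝ | ∃ k : ℤ, x - k ∈ range E.proj \ E.Dset}

/-- The `Ψ`-lift `F_Ψ(x) = k + F(x - k) + Ψ(x - k)` for the integer `k` with
`x - k ∈ [0,1]` (on `R` this integer is `⌊x⌋`). -/
noncomputable def ExpandingSystem.lift (E : ExpandingSystem I) : ℝ → ℝ :=
  fun x => (⌊x⌋ : ℝ) + E.F (x - ⌊x⌋) + (E.step (x - ⌊x⌋) : ℝ)

/-- `φ` is a geometric potential for `E`: Hölder continuous, negative, and equal to
`-log |F'(π ω)|` except possibly on a finite set. -/
def ExpandingSystem.IsGeomPotential (E : ExpandingSystem I) (φ : Seq I → ℝ) : Prop :=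
  Holder φ ∧ (∀ ω, φ ω < 0) ∧
    {ω : Seq I | φ ω ≠ -Real.log |E.F' (E.proj ω)|}.Finite

/-- `ψ` is a symbolic step length function for `E`: integer-valued, constant on
one-cylinder sets, and equal to `Ψ ∘ π` except possibly on a finite set. -/
def ExpandingSystem.IsSymbolicStep (E : ExpandingSystem I) (ψ : Seq I → ℝ) : Prop :=
  (∀ ω, ∃ k : ℤ, ψ ω = (k : ℝ)) ∧ (∀ ω τ : Seq I, ω 0 = τ 0 → ψ ω = ψ τ) ∧
    {ω : Seq I | ψ ω ≠ (E.step (E.proj ω) : ℝ)}.Finite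

/-! Since `ψ` depends only on the first letter, `S_ω ψ` is the sum of the letter values
`g i = ψ(iii…)` along `ω`, i.e. an additive monoid hom `I^* → ℝ`, and the hypotheses
`ψ̲ < 0 < ψ̄` provide letters with `g < 0` and with `g > 0`. For a value `x ≥ 0` and a
letter value `-c < 0`, Dirichlet's approximation of `x / c` gives `(m + 1) x - j c ≈ 0`,
so appending `m` copies of the word and `j` copies of the letter brings the sum near `0`;
negative values are handled symmetrically. The values in `[-N, N]` form a totally bounded
set, so finitely many such corrections suffice. -/

theorem _root_.Real.exists_nat_abs_succ_mul_sub_nat_mul_le {x c δ : ℝ} (hx : 0 ≤ x)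
    (hc : 0 < c) (hδ : 0 < δ) : ∃ m j : ℕ, |(m + 1) * x - j * c| ≤ δ := by
  obtain ⟨n, hn⟩ := exists_nat_gt (c / δ)
  have hn0 : (0 : ℝ) < n := (div_pos hc hδ).trans hn
  obtain ⟨j, k, hk, -, hjk⟩ :=
    Real.exists_int_int_abs_mul_sub_le (x / c) (n := n) (by exact_mod_cast hn0)
  have hj : 0 ≤ j := by
    have hkx : 0 ≤ (k : ℝ) * (x / c) := by positivity
    have : (1 : ℝ) / (n + 1) < 1 := by rw [div_lt_one (by positivity)]; linarith
    have : (-1 : ℝ) < j := by linarith [(abs_le.mp hjk).2]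
    have : (-1 : ℤ) < j := by exact_mod_cast this
    omega
  lift j to ℕ using hj
  obtain ⟨m, rfl⟩ : ∃ m : ℕ, k = m + 1 := ⟨(k - 1).toNat, by omega⟩
  refine ⟨m, j, ?_⟩
  calc |(m + 1) * x - j * c| = c * |((m + 1 : ℤ) : ℝ) * (x / c) - (j : ℤ)| := by
        rw [← abs_of_pos hc, ← abs_mul, abs_of_pos hc]; push_cast; field_simp
    _ ≤ c * (1 / (n + 1)) := by gcongr
    _ ≤ δ := by
        rw [div_lt_iff₀ hδ] at hn
        rw [mul_one_div, div_le_iff₀ (by positivity)]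
        nlinarith

section MonoidHom

variable {A : Type*} [AddMonoid A] (f : A →+ ℝ)

theorem _root_.AddMonoidHom.exists_abs_map_add_le_of_nonneg {a x : A} (ha : f a < 0)
    (hx : 0 ≤ f x) {δ : ℝ} (hδ : 0 < δ) : ∃ y, |f (x + y)| ≤ δ := by
  obtain ⟨m, j, h⟩ := Real.exists_nat_abs_succ_mul_sub_nat_mul_le hx (neg_pos.mpr ha) hδ
  refine ⟨m • x + j • a, ?_⟩
  rw [← add_assoc, ← succ_nsmul', map_add, map_nsmul, map_nsmul, nsmul_eq_mul, nsmul_eq_mul]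
  convert h using 2
  push_cast
  ring

theorem _root_.AddMonoidHom.exists_abs_map_add_le {a b : A} (ha : f a < 0) (hb : 0 < f b)
    (x : A) {δ : ℝ} (hδ : 0 < δ) : ∃ y, |f (x + y)| ≤ δ := by
  rcases le_or_gt 0 (f x) with hx | hx
  · exact f.exists_abs_map_add_le_of_nonneg ha hx hδ
  · obtain ⟨y, hy⟩ := (-f).exists_abs_map_add_le_of_nonneg (a := b) (by simpa using hb)
      (by simpa using hx.le) hδ
    rw [AddMonoidHom.neg_apply, abs_neg] at hy
    exact ⟨y, hy⟩

theorem _root_.AddMonoidHom.exists_finset_abs_map_add_le {a b : A} (ha : f a < 0)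
    (hb : 0 < f b) (N : ℝ) {ε : ℝ} (hε : 0 < ε) :
    ∃ Λ : Finset A, ∀ x, |f x| ≤ N → ∃ y ∈ Λ, |f (x + y)| ≤ ε := by
  classical
  have hbdd : TotallyBounded (f '' {x | |f x| ≤ N}) :=
    (isCompact_closedBall (0 : ℝ) N).totallyBounded.subset <| by
      rintro _ ⟨x, hx, rfl⟩
      simpa using hx
  obtain ⟨t, -, ht, hcover⟩ := Set.exists_subset_image_finite_and.mp
    (Metric.finite_approx_of_totallyBounded hbdd (ε / 2) (half_pos hε))
  choose y hy using fun x => f.exists_abs_map_add_le ha hb x (half_pos hε)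
  refine ⟨ht.toFinset.image y, fun x hx => ?_⟩
  obtain ⟨_, ⟨z, hz, rfl⟩, hxz⟩ := Set.mem_iUnion₂.mp (hcover ⟨x, hx, rfl⟩)
  refine ⟨y z, Finset.mem_image_of_mem _ (ht.mem_toFinset.mpr hz), ?_⟩
  rw [Metric.mem_ball, Real.dist_eq] at hxz
  have hyz := hy z
  rw [map_add] at hyz ⊢
  calc |f x + f (y z)| = |(f x - f z) + (f z + f (y z))| := by ring_nf
    _ ≤ |f x - f z| + |f z + f (y z)| := abs_add_le _ _
    _ ≤ ε := by linarith

end MonoidHom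

section OneCylinder

variable {I : Type*} {ψ : Seq I → ℝ} {g : I → ℝ}

theorem shift_iterate_apply (ω : Seq I) (k i : ℕ) : shift^[k] ω i = ω (i + k) := by
  induction k generalizing ω with
  | zero => rfl
  | succ k ih => rw [Function.iterate_succ_apply, ih]; simp [shift, add_assoc]

theorem birk_eq_sum (hψ : ∀ ω, ψ ω = g (ω 0)) (n : ℕ) (ω : Seq I) :
    birk ψ n ω = ∑ k ∈ Finset.range n, g (ω k) := by
  simp only [birk, hψ, shift_iterate_apply, zero_add]

theorem birk_length_eq_sum_map (hψ : ∀ ω, ψ ω = g (ω 0)) {w : List I} {x : Seq I}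
    (hx : x ∈ cyl w) : birk ψ w.length x = (w.map g).sum := by
  rw [birk_eq_sum hψ, ← Fin.sum_univ_eq_sum_range (fun k => g (x k)),
    ← Fin.sum_univ_fun_getElem]
  exact Finset.sum_congr rfl fun i _ => by rw [hx i, List.get_eq_getElem]

theorem cyl_nonempty [Nonempty I] (w : List I) : (cyl w).Nonempty := by
  classical
  exact ⟨fun k => if h : k < w.length then w.get ⟨k, h⟩ else Classical.arbitrary I,
    fun i => by simp⟩

theorem Sword_eq_lift [Nonempty I] (hψ : ∀ ω, ψ ω = g (ω 0)) (w : List I) :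
    Sword ψ w = FreeAddMonoid.lift g (FreeAddMonoid.ofList w) := by
  have himg : birk ψ w.length '' cyl w = {(w.map g).sum} :=
    (cyl_nonempty w).image_const _ ▸ Set.image_congr fun x hx => birk_length_eq_sum_map hψ hx
  rw [Sword, himg, csSup_singleton, FreeAddMonoid.lift_ofList]

theorem exists_neg_of_psiLow_neg (hψ : ∀ ω, ψ ω = g (ω 0)) (h : psiLow ψ < 0) :
    ∃ i, g i < 0 := by
  by_contra! hg
  refine h.not_ge <| Real.iInf_nonneg fun ω => ?_
  rw [liminf_eq]
  refine Real.sSup_nonneg' ⟨0, Eventually.of_forall fun n => ?_, le_rfl⟩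
  rw [birk_eq_sum hψ]
  exact div_nonneg (Finset.sum_nonneg fun k _ => hg _) n.cast_nonneg

theorem exists_pos_of_psiUpp_pos (hψ : ∀ ω, ψ ω = g (ω 0)) (h : 0 < psiUpp ψ) :
    ∃ i, 0 < g i := by
  by_contra! hg
  refine h.not_ge <| Real.iSup_nonpos fun ω => ?_
  rw [limsup_eq]
  refine Real.sInf_nonpos' ⟨0, Eventually.of_forall fun n => ?_, le_rfl⟩
  rw [birk_eq_sum hψ]
  exact div_nonpos_of_nonpos_of_nonneg (Finset.sum_nonpos fun k _ => hg _) n.cast_nonneg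

end OneCylinder

theorem statement14_general {I : Type*} (ψ : Seq I → ℝ)
    (hψcyl : ∀ ω τ : Seq I, ω 0 = τ 0 → ψ ω = ψ τ)
    (hlow : psiLow ψ < 0) (hupp : 0 < psiUpp ψ) :
    ∀ N : ℝ, 0 < N → ∀ ε : ℝ, 0 < ε → ∃ Λ : Finset (List I),
      ∀ w : List I, |Sword ψ w| ≤ N → ∃ v ∈ Λ, |Sword ψ (w ++ v)| ≤ ε := by
  intro N _ ε hε
  set g : I → ℝ := fun i => ψ fun _ => i
  have hψ : ∀ ω, ψ ω = g (ω 0) := fun ω => hψcyl _ _ rfl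
  obtain ⟨i₀, hi₀⟩ := exists_neg_of_psiLow_neg hψ hlow
  obtain ⟨i₁, hi₁⟩ := exists_pos_of_psiUpp_pos hψ hupp
  have : Nonempty I := ⟨i₀⟩
  obtain ⟨Λ, hΛ⟩ := (FreeAddMonoid.lift g).exists_finset_abs_map_add_le
    (a := .of i₀) (b := .of i₁) (by simpa using hi₀) (by simpa using hi₁) N hε
  refine ⟨Λ.map FreeAddMonoid.toList.toEmbedding, fun w hw => ?_⟩
  obtain ⟨v, hv, hwv⟩ := hΛ (.ofList w) (by rwa [← Sword_eq_lift hψ])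
  refine ⟨v.toList, Finset.mem_map_of_mem _ hv, ?_⟩
  rwa [Sword_eq_lift hψ, FreeAddMonoid.ofList_append, FreeAddMonoid.ofList_toList]

/-- Lemma 3.5: if `ψ` is constant on one-cylinder sets and
`0 ∈ (ψ̲, ψ̄)`, then for every `N > 0` and `ε > 0` there is a finite set `Λ ⊂ I^*` of
words such that every word `ω` with `|S_ω ψ| ≤ N` admits `ν ∈ Λ` with
`|S_{ων} ψ| ≤ ε`. -/
theorem statement14 {I : Type*} [Fintype I] (ψ : Seq I → ℝ)
    (hψcyl : ∀ ω τ : Seq I, ω 0 = τ 0 → ψ ω = ψ τ)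
    (hlow : psiLow ψ < 0) (hupp : 0 < psiUpp ψ) :
    ∀ N : ℝ, 0 < N → ∀ ε : ℝ, 0 < ε → ∃ Λ : Finset (List I),
      ∀ w : List I, |Sword ψ w| ≤ N → ∃ v ∈ Λ, |Sword ψ (w ++ v)| ≤ ε :=
  statement14_general ψ hψcyl hlow hupp

end ThermoTransient
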